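/- Consider the time-invariant single-virus layered SIWS model under Assumptions A1 and A2. The Jacobian matrix of the update map z ↦ z − h(D_f − (I − Z)B_f)z at the healthy state z = 0 equals I − hD_f + hB_f. Consequently, if the basic reproduction number satisfies ρ(D_f^{−1}B_f) ≤ 1, then ρ(I − hD_f + hB_f) ≤ 1 and the healthy state is locally exponentially stable with convergence rate ρ(I − hD_f + hB_f): there exist ε > 0 and c > 0 such that every solution with z(0) ∈ D and ‖z(0)‖ ≤ ε satisfies ‖z(t)‖ ≤ c·ρ(I − hD_f + hB_f)^t·‖z(0)‖ for all t ≥ 0. -/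

import Mathlib

open Matrix Filter

/-- Index type of the layered system: `n` population nodes plus `m` resource nodes. -/
abbrev SIdx (n m : ℕ) := Fin n ⊕ Fin m

/-- Spectral radius of a real square matrix (largest modulus of a complex eigenvalue). -/
noncomputable def specRad {ι : Type} [Fintype ι] [DecidableEq ι] (M : Matrix ι ι ℝ) : ℝ :=
  sSup {r : ℝ | ∃ μ ∈ spectrum ℂ (M.map fun x => (x : ℂ)), r = ‖μ‖}

/-- Irreducibility of a matrix: every node can reach every other node in the associated graph. -/
def Irred {ι : Type} [Fintype ι] [DecidableEq ι] (M : Matrix ι ι ℝ) : Prop :=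
  ∀ i j : ι, i ≠ j → ∃ k : ℕ, (M ^ k) i j ≠ 0

/-- The matrix `Z(z)`: diagonal of the population part of the state, zeros elsewhere. -/
noncomputable def Zm {n m : ℕ} (z : SIdx n m → ℝ) : Matrix (SIdx n m) (SIdx n m) ℝ :=
  Matrix.diagonal (Sum.elim (fun i => z (Sum.inl i)) fun _ => (0 : ℝ))

/-- The layered infection matrix `B_f = [[B, B_w],[C_w, 0]]`. -/
noncomputable def BfM {n m : ℕ} (B : Matrix (Fin n) (Fin n) ℝ) (Bw : Matrix (Fin n) (Fin m) ℝ)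
    (Cw : Matrix (Fin m) (Fin n) ℝ) : Matrix (SIdx n m) (SIdx n m) ℝ :=
  Matrix.fromBlocks B Bw Cw 0

/-- The layered healing matrix `D_f = diag(δ, δ^w)`. -/
noncomputable def DfM {n m : ℕ} (δ : Fin n → ℝ) (δw : Fin m → ℝ) :
    Matrix (SIdx n m) (SIdx n m) ℝ :=
  Matrix.diagonal (Sum.elim δ δw)

/-- One step of the single-virus SIWS dynamics:
`z ↦ z − h (D_f − (I − Z(z)) B_f) z`. -/
noncomputable def step {n m : ℕ} (h : ℝ) (Dfm Bfm : Matrix (SIdx n m) (SIdx n m) ℝ)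
    (z : SIdx n m → ℝ) : SIdx n m → ℝ :=
  z - h • ((Dfm - (1 - Zm z) * Bfm).mulVec z)

/-- The system domain `D = [0,1]^n × [0, w_max]^m`. -/
def inD {n m : ℕ} (wmax : ℝ) (z : SIdx n m → ℝ) : Prop :=
  (∀ i : Fin n, z (Sum.inl i) ∈ Set.Icc (0 : ℝ) 1) ∧
    ∀ j : Fin m, z (Sum.inr j) ∈ Set.Icc (0 : ℝ) wmax

/-- Assumption A1 on the parameters of the single-virus SIWS model. -/
structure A1 {n m : ℕ} (h : ℝ) (δ : Fin n → ℝ) (δw : Fin m → ℝ)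
    (B : Matrix (Fin n) (Fin n) ℝ) (Bw : Matrix (Fin n) (Fin m) ℝ)
    (Cw : Matrix (Fin m) (Fin n) ℝ) (wmax : ℝ) : Prop where
  h_pos : 0 < h
  delta_pos : ∀ i, 0 < δ i
  deltaw_pos : ∀ j, 0 < δw j
  B_nonneg : ∀ i j, 0 ≤ B i j
  Bw_nonneg : ∀ i j, 0 ≤ Bw i j
  Cw_nonneg : ∀ j k, 0 ≤ Cw j k
  Cw_row_pos : ∀ j, ∃ k, 0 < Cw j k
  wmax_pos : 0 < wmax
  ratio_mem : ∀ j, (∑ k, Cw j k) / δw j ∈ Set.Icc (0 : ℝ) wmax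
  h_delta : ∀ i, h * δ i ∈ Set.Ioc (0 : ℝ) 1
  h_deltaw : ∀ j, h * δw j ∈ Set.Ioc (0 : ℝ) 1
  h_beta : ∀ i, h * ((∑ j, B i j) + ∑ j, Bw i j * wmax) ∈ Set.Icc (0 : ℝ) 1

/-- Assumption A3: `h(δ_i + Σ_j β_{ij} + Σ_j β^w_{ij} w_max) ∈ [0,1]` for all `i`. -/
def A3 {n m : ℕ} (h : ℝ) (δ : Fin n → ℝ) (B : Matrix (Fin n) (Fin n) ℝ)
    (Bw : Matrix (Fin n) (Fin m) ℝ) (wmax : ℝ) : Prop :=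
  ∀ i, h * (δ i + (∑ j, B i j) + ∑ j, Bw i j * wmax) ∈ Set.Icc (0 : ℝ) 1

/-!
Write `step z = M z - h Z(z) B_f z` with `M = I - h D_f + h B_f`: the remainder is quadratic in
`z`, which gives the Jacobian. The other claims rest on Perron–Frobenius for the irreducible
nonnegative matrices `D_f⁻¹ B_f` and `M`, obtained by maximizing the Collatz–Wielandt function
over the standard simplex. A positive Perron vector `u` of `D_f⁻¹ B_f`, i.e.
`B_f u = ρ(D_f⁻¹ B_f) D_f u`, satisfies `M u ≤ u`, and a positive supersolution bounds the
spectral radius: `ρ(M) ≤ 1`. On the invariant box `D` the dynamics is nonnegative and dominated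
by its linearization, `0 ≤ step z ≤ M z`; so for a positive Perron vector `v` of `M` the bound
`z(t) ≤ ρ(M)^t ‖v⁻¹‖ ‖z(0)‖ v` propagates by induction.
-/

open Finset Topology

namespace Matrix

variable {κ ι : Type} [Fintype ι]

lemma mulVec_le_mulVec_of_nonneg {A : Matrix κ ι ℝ} (hA : ∀ i j, 0 ≤ A i j) {x y : ι → ℝ}
    (hxy : x ≤ y) : A *ᵥ x ≤ A *ᵥ y := fun i =>
  sum_le_sum fun j _ => mul_le_mul_of_nonneg_left (hxy j) (hA i j)

lemma mulVec_nonneg {A : Matrix κ ι ℝ} (hA : ∀ i j, 0 ≤ A i j) {x : ι → ℝ} (hx : 0 ≤ x) :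
    0 ≤ A *ᵥ x := by
  simpa using mulVec_le_mulVec_of_nonneg hA hx

lemma mulVec_pos_of_apply_pos {P : Matrix ι ι ℝ} (hP : ∀ i j, 0 < P i j) {x : ι → ℝ}
    (hx : 0 ≤ x) (hx0 : x ≠ 0) (i : ι) : 0 < (P *ᵥ x) i := by
  obtain ⟨j, hj⟩ := Function.ne_iff.mp hx0
  exact sum_pos' (fun k _ => mul_nonneg (hP i k).le (hx k))
    ⟨j, mem_univ j, mul_pos (hP i j) ((hx j).lt_of_ne' hj)⟩

lemma pow_apply_pos_of_pos_imp_pos [DecidableEq ι] {A C : Matrix ι ι ℝ} (hA : ∀ i j, 0 ≤ A i j)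
    (hC : ∀ i j, 0 ≤ C i j) (hAC : ∀ i j, 0 < A i j → 0 < C i j) (k : ℕ) (i j : ι) (hk : 0 < (A ^ k) i j) :
    0 < (C ^ k) i j := by
  induction k generalizing j with
  | zero => simpa [one_apply] using hk
  | succ k ih =>
    rw [pow_succ, mul_apply] at hk ⊢
    obtain ⟨l, -, hl⟩ := (sum_pos_iff_of_nonneg fun l _ =>
      mul_nonneg (pow_apply_nonneg hA k i l) (hA l j)).mp hk
    refine sum_pos' (fun l _ => mul_nonneg (pow_apply_nonneg hC k i l) (hC l j))
      ⟨l, mem_univ l, mul_pos (ih l ?_) (hAC l j ?_)⟩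
    · exact pos_of_mul_pos_left hl (hA l j)
    · exact pos_of_mul_pos_right hl (pow_apply_nonneg hA k i l)

lemma mem_spectrum_iff_exists_mulVec_eq_smul [DecidableEq ι] {K : Type} [Field K]
    {M : Matrix ι ι K} {μ : K} : μ ∈ spectrum K M ↔ ∃ w ≠ 0, M *ᵥ w = μ • w := by
  rw [← spectrum_toLin', ← Module.End.hasEigenvalue_iff_mem_spectrum,
    Module.End.hasEigenvalue_iff, Submodule.ne_bot_iff]
  simp only [Module.End.mem_eigenspace_iff, toLin'_apply]
  exact ⟨fun ⟨w, hw, hw0⟩ => ⟨w, hw0, hw⟩, fun ⟨w, hw0, hw⟩ => ⟨w, hw, hw0⟩⟩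

end Matrix

section Irreducible

variable {ι : Type} [Fintype ι] [DecidableEq ι] {A C : Matrix ι ι ℝ}

lemma Irred.exists_pow_apply_pos (h : Irred A) (hA : ∀ i j, 0 ≤ A i j) (i j : ι) :
    ∃ k, 0 < (A ^ k) i j := by
  by_cases hij : i = j
  · exact ⟨0, by simp [hij]⟩
  · obtain ⟨k, hk⟩ := h i j hij
    exact ⟨k, (Matrix.pow_apply_nonneg hA k i j).lt_of_ne' hk⟩

lemma Irred.of_pos_imp_pos (h : Irred A) (hA : ∀ i j, 0 ≤ A i j) (hC : ∀ i j, 0 ≤ C i j)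
    (hAC : ∀ i j, 0 < A i j → 0 < C i j) : Irred C := by
  intro i j hij
  obtain ⟨k, hk⟩ := h.exists_pow_apply_pos hA i j
  exact ⟨k, (Matrix.pow_apply_pos_of_pos_imp_pos hA hC hAC k i j hk).ne'⟩

lemma Irred.exists_sum_pow_pos (h : Irred A) (hA : ∀ i j, 0 ≤ A i j) :
    ∃ N, ∀ i j, 0 < (∑ k ∈ range N, A ^ k) i j := by
  choose k hk using h.exists_pow_apply_pos hA
  refine ⟨univ.sup (fun p : ι × ι => k p.1 p.2) + 1, fun i j => ?_⟩
  rw [Matrix.sum_apply]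
  refine sum_pos' (fun l _ => Matrix.pow_apply_nonneg hA l i j) ⟨k i j, ?_, hk i j⟩
  exact mem_range.mpr (Nat.lt_succ_of_le (le_sup (f := fun p : ι × ι => k p.1 p.2)
    (mem_univ (i, j))))

end Irreducible

section SpectralRadius

variable {ι : Type} [Fintype ι] [DecidableEq ι] {A : Matrix ι ι ℝ}

lemma specRad_eq_sSup_image (A : Matrix ι ι ℝ) :
    specRad A = sSup (norm '' spectrum ℂ (A.map fun x => (x : ℂ))) := by
  simp only [specRad, Set.image, eq_comm]

lemma specRad_nonneg (A : Matrix ι ι ℝ) : 0 ≤ specRad A := by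
  rw [specRad_eq_sSup_image]
  exact Real.sSup_nonneg (Set.forall_mem_image.mpr fun μ _ => norm_nonneg μ)

lemma le_specRad_of_mulVec_eq_smul {x : ι → ℝ} (hx : x ≠ 0) {r : ℝ} (hr : 0 ≤ r)
    (h : A *ᵥ x = r • x) : r ≤ specRad A := by
  rw [specRad_eq_sSup_image]
  refine le_csSup ((Matrix.finite_spectrum _).image _).bddAbove ⟨r, ?_, Complex.norm_of_nonneg hr⟩
  refine Matrix.mem_spectrum_iff_exists_mulVec_eq_smul.mpr ⟨(↑) ∘ x, ?_, funext fun i => ?_⟩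
  · exact fun h0 => hx (funext fun i => by simpa using congrFun h0 i)
  · have := Complex.ofRealHom.map_mulVec A x i
    rw [h] at this
    simp only [Pi.smul_apply, smul_eq_mul, Complex.ofRealHom_eq_coe, Complex.ofReal_mul] at this
    exact this.symm

lemma exists_nonneg_norm_smul_le_mulVec (hA : ∀ i j, 0 ≤ A i j) {μ : ℂ}
    (hμ : μ ∈ spectrum ℂ (A.map fun x => (x : ℂ))) :
    ∃ x : ι → ℝ, 0 ≤ x ∧ x ≠ 0 ∧ ‖μ‖ • x ≤ A *ᵥ x := by
  obtain ⟨w, hw0, hw⟩ := Matrix.mem_spectrum_iff_exists_mulVec_eq_smul.mp hμ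
  refine ⟨fun i => ‖w i‖, fun i => norm_nonneg _, fun h0 => hw0 (funext fun i => ?_), fun i => ?_⟩
  · simpa using congrFun h0 i
  · calc ‖μ‖ * ‖w i‖ = ‖∑ j, (A i j : ℂ) * w j‖ := by
          rw [← norm_mul, ← smul_eq_mul, ← Pi.smul_apply, ← hw]; rfl
      _ ≤ ∑ j, A i j * ‖w j‖ := (norm_sum_le _ _).trans_eq <| sum_congr rfl fun j _ => by
          rw [norm_mul, Complex.norm_of_nonneg (hA i j)]

lemma specRad_le_of_mulVec_le (hA : ∀ i j, 0 ≤ A i j) {u : ι → ℝ} (hu : ∀ i, 0 < u i) {s : ℝ}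
    (hs : 0 ≤ s) (hAu : A *ᵥ u ≤ s • u) : specRad A ≤ s := by
  rw [specRad_eq_sSup_image]
  refine Real.sSup_le (Set.forall_mem_image.mpr fun μ hμ => ?_) hs
  obtain ⟨x, hx, hx0, hμx⟩ := exists_nonneg_norm_smul_le_mulVec hA hμ
  obtain ⟨j, hj⟩ := Function.ne_iff.mp hx0
  obtain ⟨i, -, hi⟩ := exists_max_image univ (fun i => x i / u i) ⟨j, mem_univ j⟩
  set t := x i / u i
  have hxt : x ≤ t • u := fun k => (div_le_iff₀ (hu k)).mp (hi k (mem_univ k))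
  have ht : 0 < t := (div_pos ((hx j).lt_of_ne' hj) (hu j)).trans_le (hi j (mem_univ j))
  have hxi : x i = t * u i := (div_mul_cancel₀ _ (hu i).ne').symm
  -- `t • u` dominates `x` and touches it at `i`
  have key : ‖μ‖ * x i ≤ s * x i :=
    calc ‖μ‖ * x i ≤ (A *ᵥ x) i := hμx i
      _ ≤ (A *ᵥ (t • u)) i := Matrix.mulVec_le_mulVec_of_nonneg hA hxt i
      _ = t * (A *ᵥ u) i := by rw [Matrix.mulVec_smul]; rfl
      _ ≤ t * (s * u i) := mul_le_mul_of_nonneg_left (hAu i) ht.le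
      _ = s * x i := by rw [hxi]; ring
  exact le_of_mul_le_mul_right key (hxi ▸ mul_pos ht (hu i))

end SpectralRadius

section PerronFrobenius

variable {ι : Type} [Fintype ι]

/-- The Perron root of `A` is the largest first coordinate in this set. -/
def collatzWielandtSet (A : Matrix ι ι ℝ) : Set (ℝ × (ι → ℝ)) :=
  {p | 0 ≤ p.1 ∧ p.2 ∈ stdSimplex ℝ ι ∧ p.1 • p.2 ≤ A *ᵥ p.2}

lemma isCompact_collatzWielandtSet (A : Matrix ι ι ℝ) : IsCompact (collatzWielandtSet A) := by
  have hclosed : IsClosed (collatzWielandtSet A) :=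
    (isClosed_le continuous_const continuous_fst).inter <|
      ((isClosed_stdSimplex ℝ ι).preimage continuous_snd).inter <|
        isClosed_le (continuous_fst.smul continuous_snd)
          (continuous_const.matrix_mulVec continuous_snd)
  refine ((isCompact_Icc (a := 0) (b := ∑ i, ∑ j, |A i j|)).prod
    (isCompact_stdSimplex ℝ ι)).of_isClosed_subset hclosed ?_
  rintro ⟨r, x⟩ ⟨hr, hx, hrx⟩
  refine ⟨⟨hr, ?_⟩, hx⟩
  show r ≤ ∑ i, ∑ j, |A i j|
  calc r = ∑ i, r * x i := by rw [← mul_sum, hx.2, mul_one]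
    _ ≤ ∑ i, (A *ᵥ x) i := sum_le_sum fun i _ => hrx i
    _ ≤ ∑ i, ∑ j, |A i j| := sum_le_sum fun i _ => sum_le_sum fun j _ => by
        have := mem_Icc_of_mem_stdSimplex hx j
        calc A i j * x j ≤ |A i j| * x j := mul_le_mul_of_nonneg_right (le_abs_self _) this.1
          _ ≤ |A i j| := mul_le_of_le_one_right (abs_nonneg _) this.2

lemma mem_collatzWielandtSet_of_smul_le {A : Matrix ι ι ℝ} {r : ℝ} {x : ι → ℝ} (hr : 0 ≤ r)
    (hx : 0 ≤ x) (hx0 : x ≠ 0) (h : r • x ≤ A *ᵥ x) :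
    (r, (∑ i, x i)⁻¹ • x) ∈ collatzWielandtSet A := by
  obtain ⟨j, hj⟩ := Function.ne_iff.mp hx0
  have hsum : 0 < ∑ i, x i := sum_pos' (fun i _ => hx i) ⟨j, mem_univ j, (hx j).lt_of_ne' hj⟩
  refine ⟨hr, ⟨fun i => mul_nonneg (inv_nonneg.mpr hsum.le) (hx i), ?_⟩, ?_⟩
  · simp only [Pi.smul_apply, smul_eq_mul, ← mul_sum, inv_mul_cancel₀ hsum.ne']
  · rw [Matrix.mulVec_smul, smul_comm]
    exact smul_le_smul_of_nonneg_left h (inv_nonneg.mpr hsum.le)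

lemma exists_gt_smul_le_of_mul_lt {r : ℝ} {z w : ι → ℝ} (h : ∀ i, r * z i < w i) :
    ∃ r' > r, r' • z ≤ w := by
  have hev : ∀ᶠ r' in 𝓝[>] r, ∀ i, r' * z i < w i :=
    eventually_all.mpr fun i => nhdsWithin_le_nhds <|
      ((continuous_id.mul continuous_const).tendsto r).eventually (gt_mem_nhds (h i))
  obtain ⟨r', hr', hr'r⟩ := (hev.and self_mem_nhdsWithin).exists
  exact ⟨r', hr'r, fun i => (hr' i).le⟩

variable {A : Matrix ι ι ℝ}

lemma mulVec_eq_smul_of_isMaxOn {P : Matrix ι ι ℝ}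
    (hP : ∀ i j, 0 < P i j) (hPA : Commute P A) {p : ℝ × (ι → ℝ)}
    (hp : p ∈ collatzWielandtSet A) (hmax : IsMaxOn Prod.fst (collatzWielandtSet A) p) :
    A *ᵥ p.2 = p.1 • p.2 := by
  obtain ⟨r, x⟩ := p
  obtain ⟨hr, hx, hrx⟩ := hp
  by_contra hne
  set y := A *ᵥ x - r • x
  have hx0 : x ≠ 0 := fun h0 => by simpa [h0] using hx.2
  obtain ⟨j, -⟩ := Function.ne_iff.mp hx0
  have hz : ∀ i, 0 < (P *ᵥ x) i := Matrix.mulVec_pos_of_apply_pos hP hx.1 hx0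
  -- Applying `P` makes the defect `y` strictly positive, so `r` can be increased.
  have hPy : ∀ i, 0 < (P *ᵥ y) i :=
    Matrix.mulVec_pos_of_apply_pos hP (sub_nonneg.mpr hrx) (sub_ne_zero.mpr hne)
  have hAz : A *ᵥ (P *ᵥ x) = r • (P *ᵥ x) + P *ᵥ y := by
    rw [Matrix.mulVec_mulVec, ← hPA.eq, ← Matrix.mulVec_mulVec, Matrix.mulVec_sub,
      Matrix.mulVec_smul, add_sub_cancel]
  obtain ⟨r', hr'r, hr'⟩ := exists_gt_smul_le_of_mul_lt (r := r) (z := P *ᵥ x)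
    (w := A *ᵥ (P *ᵥ x)) fun i => by
      rw [hAz]; simpa using hPy i
  have := hmax (mem_collatzWielandtSet_of_smul_le (hr.trans hr'r.le) (fun i => (hz i).le)
    (Function.ne_iff.mpr ⟨j, (hz j).ne'⟩) hr')
  exact absurd this (not_le.mpr hr'r)

variable [DecidableEq ι]

lemma pow_mulVec_eq_smul {x : ι → ℝ} {r : ℝ} (h : A *ᵥ x = r • x) (k : ℕ) :
    (A ^ k) *ᵥ x = r ^ k • x := by
  induction k with
  | zero => simp
  | succ k ih =>
    rw [pow_succ', ← Matrix.mulVec_mulVec, ih, Matrix.mulVec_smul, h, smul_smul, pow_succ]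

theorem exists_perron_vector (hA : ∀ i j, 0 ≤ A i j) (hirr : Irred A) :
    ∃ u : ι → ℝ, (∀ i, 0 < u i) ∧ A *ᵥ u = specRad A • u := by
  rcases isEmpty_or_nonempty ι with hι | ⟨⟨i₀⟩⟩
  · exact ⟨0, isEmptyElim, Subsingleton.elim _ _⟩
  obtain ⟨N, hN⟩ := hirr.exists_sum_pow_pos hA
  have hPA : Commute (∑ k ∈ range N, A ^ k) A :=
    Commute.sum_left _ _ _ fun k _ => (Commute.refl A).pow_left k
  have hne : (collatzWielandtSet A).Nonempty :=
    ⟨(0, Pi.single i₀ 1), le_rfl, single_mem_stdSimplex ℝ i₀, by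
      simpa using Matrix.mulVec_le_mulVec_of_nonneg hA (Pi.single_nonneg.mpr zero_le_one)⟩
  obtain ⟨⟨r, x⟩, hp, hmax⟩ :=
    (isCompact_collatzWielandtSet A).exists_isMaxOn hne continuous_fst.continuousOn
  have hAx : A *ᵥ x = r • x := mulVec_eq_smul_of_isMaxOn hN hPA hp hmax
  have hx0 : x ≠ 0 := fun h0 => by simpa [h0] using hp.2.1.2
  have hPx : (∑ k ∈ range N, A ^ k) *ᵥ x = (∑ k ∈ range N, r ^ k) • x := by
    simp only [Matrix.sum_mulVec, pow_mulVec_eq_smul hAx, sum_smul]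
  have hxpos : ∀ i, 0 < x i := fun i => by
    have := Matrix.mulVec_pos_of_apply_pos hN hp.2.1.1 hx0 i
    rw [hPx] at this
    exact pos_of_mul_pos_right this (sum_nonneg fun k _ => pow_nonneg hp.1 k)
  have hr : specRad A = r := le_antisymm (specRad_le_of_mulVec_le hA hxpos hp.1 hAx.le)
    (le_specRad_of_mulVec_eq_smul hx0 hp.1 hAx)
  exact ⟨x, hxpos, hr ▸ hAx⟩

end PerronFrobenius

section Comparison

variable {ι : Type} [Fintype ι]

lemma norm_le_norm_of_nonneg_of_le {x y : ι → ℝ} (hx : 0 ≤ x) (hxy : x ≤ y) : ‖x‖ ≤ ‖y‖ :=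
  (pi_norm_le_iff_of_nonneg (norm_nonneg y)).mpr fun i => by
    rw [Real.norm_of_nonneg (hx i)]
    exact (hxy i).trans ((le_abs_self _).trans (norm_le_pi_norm y i))

/-- The `u`-weighted sup-norm of the trajectory contracts by `ρ` at each step. -/
lemma norm_le_of_le_mulVec {M : Matrix ι ι ℝ} (hM : ∀ i j, 0 ≤ M i j) {u : ι → ℝ}
    (hu : ∀ i, 0 < u i) {ρ : ℝ} (hρ : 0 ≤ ρ) (hMu : M *ᵥ u ≤ ρ • u) {z : ℕ → ι → ℝ}
    (hz : ∀ t, 0 ≤ z t) (hzM : ∀ t, z (t + 1) ≤ M *ᵥ z t) (t : ℕ) :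
    ‖z t‖ ≤ ‖u‖ * ‖u⁻¹‖ * ρ ^ t * ‖z 0‖ := by
  have hz0 : z 0 ≤ (‖u⁻¹‖ * ‖z 0‖) • u := fun i =>
    calc z 0 i ≤ ‖z 0‖ * ((u i)⁻¹ * u i) := by
          rw [inv_mul_cancel₀ (hu i).ne', mul_one]
          exact (le_abs_self _).trans (norm_le_pi_norm (z 0) i)
      _ ≤ ‖z 0‖ * (‖u⁻¹‖ * u i) := by
          gcongr
          · exact (hu i).le
          · exact (le_abs_self _).trans (norm_le_pi_norm u⁻¹ i)
      _ = ((‖u⁻¹‖ * ‖z 0‖) • u) i := by simp only [Pi.smul_apply, smul_eq_mul]; ring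
  have hzt : ∀ t, z t ≤ (ρ ^ t * (‖u⁻¹‖ * ‖z 0‖)) • u := by
    intro t
    induction t with
    | zero => simpa using hz0
    | succ t ih =>
      calc z (t + 1) ≤ M *ᵥ z t := hzM t
        _ ≤ M *ᵥ ((ρ ^ t * (‖u⁻¹‖ * ‖z 0‖)) • u) := Matrix.mulVec_le_mulVec_of_nonneg hM ih
        _ ≤ (ρ ^ t * (‖u⁻¹‖ * ‖z 0‖)) • ρ • u := by
          rw [Matrix.mulVec_smul]
          exact smul_le_smul_of_nonneg_left hMu (by positivity)
        _ = (ρ ^ (t + 1) * (‖u⁻¹‖ * ‖z 0‖)) • u := by rw [smul_smul, pow_succ]; ring_nf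
  calc ‖z t‖ ≤ ‖(ρ ^ t * (‖u⁻¹‖ * ‖z 0‖)) • u‖ := norm_le_norm_of_nonneg_of_le (hz t) (hzt t)
    _ = ‖u‖ * ‖u⁻¹‖ * ρ ^ t * ‖z 0‖ := by
      rw [norm_smul, Real.norm_of_nonneg (by positivity)]; ring

end Comparison

section Linearization

variable {n m : ℕ}

lemma step_eq_mulVec_sub (h : ℝ) (Df Bf : Matrix (SIdx n m) (SIdx n m) ℝ) (z : SIdx n m → ℝ) :
    step h Df Bf z = (1 - h • Df + h • Bf) *ᵥ z - h • (Zm z *ᵥ (Bf *ᵥ z)) := by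
  rw [step, Matrix.sub_mulVec, ← Matrix.mulVec_mulVec, Matrix.sub_mulVec, Matrix.one_mulVec,
    Matrix.add_mulVec, Matrix.sub_mulVec, Matrix.one_mulVec, Matrix.smul_mulVec,
    Matrix.smul_mulVec]
  module

lemma Zm_mulVec_apply (z w : SIdx n m → ℝ) (k : SIdx n m) :
    (Zm z *ᵥ w) k = Sum.elim (fun i => z (Sum.inl i)) (fun _ => 0) k * w k :=
  Matrix.mulVec_diagonal _ _ _

lemma norm_Zm_mulVec_le (z w : SIdx n m → ℝ) : ‖Zm z *ᵥ w‖ ≤ ‖z‖ * ‖w‖ := by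
  refine (pi_norm_le_iff_of_nonneg (by positivity)).mpr fun k => ?_
  rw [Zm_mulVec_apply, norm_mul]
  gcongr
  · rcases k with i | j
    · exact norm_le_pi_norm z _
    · simp
  · exact norm_le_pi_norm w k

lemma hasFDerivAt_Zm_mulVec (Bf : Matrix (SIdx n m) (SIdx n m) ℝ) :
    HasFDerivAt (fun z => Zm z *ᵥ (Bf *ᵥ z)) (0 : (SIdx n m → ℝ) →L[ℝ] SIdx n m → ℝ) 0 := by
  rw [hasFDerivAt_iff_isLittleO_nhds_zero]
  have hB : Tendsto (fun z : SIdx n m → ℝ => ‖Bf *ᵥ z‖) (𝓝 0) (𝓝 0) := by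
    have hc : Continuous fun z : SIdx n m → ℝ => ‖Bf *ᵥ z‖ :=
      (continuous_const.matrix_mulVec continuous_id).norm
    simpa using hc.tendsto 0
  have hquad : (fun z : SIdx n m → ℝ => ‖z‖ * ‖Bf *ᵥ z‖) =o[𝓝 0] fun z => ‖z‖ * 1 :=
    (Asymptotics.isBigO_refl _ _).mul_isLittleO ((Asymptotics.isLittleO_one_iff ℝ).mpr hB)
  refine (Asymptotics.IsBigO.of_bound 1 (Filter.Eventually.of_forall fun z => ?_)).trans_isLittleO
    (hquad.trans_isBigO ?_)
  · simpa [abs_mul] using norm_Zm_mulVec_le z (Bf *ᵥ z)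
  · simpa using (Asymptotics.isBigO_refl (fun z : SIdx n m → ℝ => z) (𝓝 0)).norm_left

lemma hasFDerivAt_step_zero (h : ℝ) (Df Bf : Matrix (SIdx n m) (SIdx n m) ℝ) :
    HasFDerivAt (step h Df Bf)
      (LinearMap.toContinuousLinearMap (1 - h • Df + h • Bf).mulVecLin) 0 := by
  set L := LinearMap.toContinuousLinearMap (1 - h • Df + h • Bf).mulVecLin
  have heq : step h Df Bf = fun z => L z - h • (Zm z *ᵥ (Bf *ᵥ z)) := by
    funext z
    rw [step_eq_mulVec_sub, LinearMap.coe_toContinuousLinearMap', Matrix.mulVecLin_apply]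
  rw [heq]
  simpa using L.hasFDerivAt.sub ((hasFDerivAt_Zm_mulVec Bf).const_smul h)

lemma fderiv_step_zero (h : ℝ) (Df Bf : Matrix (SIdx n m) (SIdx n m) ℝ) :
    ⇑(fderiv ℝ (step h Df Bf) 0) = (1 - h • Df + h • Bf).mulVec := by
  rw [(hasFDerivAt_step_zero h Df Bf).fderiv, LinearMap.coe_toContinuousLinearMap',
    Matrix.coe_mulVecLin]

end Linearization

section SIWS

variable {n m : ℕ} {h wmax : ℝ} {δ : Fin n → ℝ} {δw : Fin m → ℝ} {B : Matrix (Fin n) (Fin n) ℝ}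
  {Bw : Matrix (Fin n) (Fin m) ℝ} {Cw : Matrix (Fin m) (Fin n) ℝ}

lemma BfM_mulVec (z : SIdx n m → ℝ) :
    BfM B Bw Cw *ᵥ z =
      Sum.elim (B *ᵥ (z ∘ Sum.inl) + Bw *ᵥ (z ∘ Sum.inr)) (Cw *ᵥ (z ∘ Sum.inl)) := by
  rw [BfM, Matrix.fromBlocks_mulVec, Matrix.zero_mulVec, add_zero]

lemma DfM_mulVec_apply (z : SIdx n m → ℝ) (k : SIdx n m) :
    (DfM δ δw *ᵥ z) k = Sum.elim δ δw k * z k :=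
  Matrix.mulVec_diagonal _ _ _

lemma DfM_inv (hd : ∀ k, Sum.elim δ δw k ≠ 0) :
    (DfM δ δw)⁻¹ = Matrix.diagonal (Sum.elim δ δw)⁻¹ := by
  refine Matrix.inv_eq_left_inv ?_
  rw [DfM, Matrix.diagonal_mul_diagonal, ← Matrix.diagonal_one]
  exact congrArg Matrix.diagonal (funext fun k => inv_mul_cancel₀ (hd k))

lemma jacobian_apply (Bf : Matrix (SIdx n m) (SIdx n m) ℝ) (i j : SIdx n m) :
    (1 - h • DfM δ δw + h • Bf) i j =
      (if i = j then 1 - h * Sum.elim δ δw i else 0) + h * Bf i j := by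
  by_cases hij : i = j
  · subst hij; simp [DfM]
  · simp [DfM, hij, Matrix.one_apply_ne hij]

lemma jacobian_mulVec_apply (Bf : Matrix (SIdx n m) (SIdx n m) ℝ) (z : SIdx n m → ℝ)
    (k : SIdx n m) :
    ((1 - h • DfM δ δw + h • Bf) *ᵥ z) k = (1 - h * Sum.elim δ δw k) * z k + h * (Bf *ᵥ z) k := by
  simp only [Matrix.add_mulVec, Matrix.sub_mulVec, Matrix.one_mulVec, Matrix.smul_mulVec,
    Pi.add_apply, Pi.sub_apply, Pi.smul_apply, smul_eq_mul, DfM_mulVec_apply]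
  ring

lemma step_apply (Bf : Matrix (SIdx n m) (SIdx n m) ℝ) (z : SIdx n m → ℝ) (k : SIdx n m) :
    step h (DfM δ δw) Bf z k = (1 - h * Sum.elim δ δw k) * z k +
      h * (1 - Sum.elim (fun i => z (Sum.inl i)) (fun _ => 0) k) * (Bf *ᵥ z) k := by
  rw [step_eq_mulVec_sub, Pi.sub_apply, jacobian_mulVec_apply, Pi.smul_apply, Zm_mulVec_apply,
    smul_eq_mul]
  ring

lemma step_le_mulVec (hh : 0 ≤ h) {Df Bf : Matrix (SIdx n m) (SIdx n m) ℝ}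
    (hBf : ∀ i j, 0 ≤ Bf i j) {z : SIdx n m → ℝ} (hz : 0 ≤ z) :
    step h Df Bf z ≤ (1 - h • Df + h • Bf) *ᵥ z := by
  rw [step_eq_mulVec_sub]
  refine sub_le_self _ (smul_nonneg hh fun k => ?_)
  rw [Zm_mulVec_apply]
  refine mul_nonneg ?_ (Matrix.mulVec_nonneg hBf hz k)
  rcases k with i | j
  · exact hz (Sum.inl i)
  · exact le_rfl

lemma nonneg_of_inD {z : SIdx n m → ℝ} (hz : inD wmax z) : 0 ≤ z := by
  rintro (i | j)
  · exact (hz.1 i).1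
  · exact (hz.2 j).1

lemma A1.sumElim_delta_pos (hA1 : A1 h δ δw B Bw Cw wmax) (k : SIdx n m) :
    0 < Sum.elim δ δw k := by
  rcases k with i | j
  · exact hA1.delta_pos i
  · exact hA1.deltaw_pos j

lemma A1.h_mul_sumElim_delta_le_one (hA1 : A1 h δ δw B Bw Cw wmax) (k : SIdx n m) :
    h * Sum.elim δ δw k ≤ 1 := by
  rcases k with i | j
  · exact (hA1.h_delta i).2
  · exact (hA1.h_deltaw j).2

lemma A1.BfM_nonneg (hA1 : A1 h δ δw B Bw Cw wmax) : ∀ i j, 0 ≤ BfM B Bw Cw i j := by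
  rintro (i | i) (j | j)
  · exact hA1.B_nonneg i j
  · exact hA1.Bw_nonneg i j
  · exact hA1.Cw_nonneg i j
  · exact le_rfl

lemma A1.jacobian_nonneg (hA1 : A1 h δ δw B Bw Cw wmax) (i j : SIdx n m) :
    0 ≤ (1 - h • DfM δ δw + h • BfM B Bw Cw) i j := by
  rw [jacobian_apply]
  have := mul_nonneg hA1.h_pos.le (hA1.BfM_nonneg i j)
  split_ifs
  · linarith [hA1.h_mul_sumElim_delta_le_one i]
  · linarith

lemma A1.irred_jacobian (hA1 : A1 h δ δw B Bw Cw wmax) (hA2 : Irred (BfM B Bw Cw)) :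
    Irred (1 - h • DfM δ δw + h • BfM B Bw Cw) := by
  refine hA2.of_pos_imp_pos hA1.BfM_nonneg hA1.jacobian_nonneg fun i j hij => ?_
  rw [jacobian_apply]
  have := mul_pos hA1.h_pos hij
  split_ifs
  · linarith [hA1.h_mul_sumElim_delta_le_one i]
  · linarith

lemma A1.specRad_jacobian_le_one (hA1 : A1 h δ δw B Bw Cw wmax) (hA2 : Irred (BfM B Bw Cw))
    (hR : specRad ((DfM δ δw)⁻¹ * BfM B Bw Cw) ≤ 1) :
    specRad (1 - h • DfM δ δw + h • BfM B Bw Cw) ≤ 1 := by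
  have hd := hA1.sumElim_delta_pos
  have hinv := DfM_inv fun k => (hd k).ne'
  have happ : ∀ i j, ((DfM δ δw)⁻¹ * BfM B Bw Cw) i j = (Sum.elim δ δw i)⁻¹ * BfM B Bw Cw i j :=
    fun i j => by rw [hinv, Matrix.diagonal_mul, Pi.inv_apply]
  have hnonneg : ∀ i j, 0 ≤ ((DfM δ δw)⁻¹ * BfM B Bw Cw) i j := fun i j => by
    rw [happ]; exact mul_nonneg (inv_nonneg.mpr (hd i).le) (hA1.BfM_nonneg i j)
  obtain ⟨u, hu, hAu⟩ := exists_perron_vector hnonneg <|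
    hA2.of_pos_imp_pos hA1.BfM_nonneg hnonneg fun i j hij => by
      rw [happ]; exact mul_pos (inv_pos.mpr (hd i)) hij
  refine specRad_le_of_mulVec_le hA1.jacobian_nonneg hu zero_le_one fun k => ?_
  set r := specRad ((DfM δ δw)⁻¹ * BfM B Bw Cw)
  have hBu : (BfM B Bw Cw *ᵥ u) k = r * (Sum.elim δ δw k * u k) := by
    have := congrFun hAu k
    rw [← Matrix.mulVec_mulVec, hinv, Matrix.mulVec_diagonal, Pi.smul_apply, smul_eq_mul,
      Pi.inv_apply, inv_mul_eq_iff_eq_mul₀ (hd k).ne'] at this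
    rw [this]; ring
  rw [jacobian_mulVec_apply, hBu, one_smul]
  nlinarith [mul_nonneg (mul_nonneg hA1.h_pos.le (mul_pos (hd k) (hu k)).le) (sub_nonneg.mpr hR)]

lemma A1.h_mul_BfM_mulVec_inl_le_one (hA1 : A1 h δ δw B Bw Cw wmax) {z : SIdx n m → ℝ}
    (hz : inD wmax z) (i : Fin n) : h * (BfM B Bw Cw *ᵥ z) (Sum.inl i) ≤ 1 := by
  have hB := Matrix.mulVec_le_mulVec_of_nonneg hA1.B_nonneg (x := z ∘ Sum.inl) (y := fun _ => 1)
    fun k => (hz.1 k).2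
  have hBw := Matrix.mulVec_le_mulVec_of_nonneg hA1.Bw_nonneg (x := z ∘ Sum.inr)
    (y := fun _ => wmax) fun k => (hz.2 k).2
  calc h * (BfM B Bw Cw *ᵥ z) (Sum.inl i)
      ≤ h * ((∑ j, B i j) + ∑ j, Bw i j * wmax) := by
        rw [BfM_mulVec, Sum.elim_inl, Pi.add_apply]
        refine mul_le_mul_of_nonneg_left (add_le_add ((hB i).trans_eq ?_) (hBw i)) hA1.h_pos.le
        simp [Matrix.mulVec, dotProduct]
    _ ≤ 1 := (hA1.h_beta i).2

lemma A1.BfM_mulVec_inr_le (hA1 : A1 h δ δw B Bw Cw wmax) {z : SIdx n m → ℝ}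
    (hz : inD wmax z) (j : Fin m) : (BfM B Bw Cw *ᵥ z) (Sum.inr j) ≤ δw j * wmax := by
  have hC := Matrix.mulVec_le_mulVec_of_nonneg hA1.Cw_nonneg (x := z ∘ Sum.inl) (y := fun _ => 1)
    fun k => (hz.1 k).2
  calc (BfM B Bw Cw *ᵥ z) (Sum.inr j) ≤ ∑ k, Cw j k := by
        rw [BfM_mulVec, Sum.elim_inr]
        exact (hC j).trans_eq (by simp [Matrix.mulVec, dotProduct])
    _ ≤ δw j * wmax := by
        have := (hA1.ratio_mem j).2
        rwa [div_le_iff₀ (hA1.deltaw_pos j), mul_comm] at this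

lemma A1.step_mem_inD (hA1 : A1 h δ δw B Bw Cw wmax) {z : SIdx n m → ℝ} (hz : inD wmax z) :
    inD wmax (step h (DfM δ δw) (BfM B Bw Cw) z) := by
  have hβ : 0 ≤ BfM B Bw Cw *ᵥ z := Matrix.mulVec_nonneg hA1.BfM_nonneg (nonneg_of_inD hz)
  refine ⟨fun i => ?_, fun j => ?_⟩
  · have hβ1 := hA1.h_mul_BfM_mulVec_inl_le_one hz i
    have hβ0 : 0 ≤ (BfM B Bw Cw *ᵥ z) (Sum.inl i) := hβ _
    obtain ⟨hx0, hx1⟩ := hz.1 i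
    obtain ⟨hhδ0, hhδ1⟩ := hA1.h_delta i
    rw [step_apply, Sum.elim_inl, Sum.elim_inl]
    constructor
    · nlinarith [mul_nonneg (sub_nonneg.mpr hhδ1) hx0,
        mul_nonneg (mul_nonneg hA1.h_pos.le (sub_nonneg.mpr hx1)) hβ0]
    · nlinarith [mul_le_mul_of_nonneg_left hβ1 (sub_nonneg.mpr hx1), mul_nonneg hhδ0.le hx0]
  · have hβ1 := hA1.BfM_mulVec_inr_le hz j
    have hβ0 : 0 ≤ (BfM B Bw Cw *ᵥ z) (Sum.inr j) := hβ _
    obtain ⟨hw0, hw1⟩ := hz.2 j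
    obtain ⟨hhδ0, hhδ1⟩ := hA1.h_deltaw j
    rw [step_apply, Sum.elim_inr, Sum.elim_inr, sub_zero, mul_one]
    constructor
    · nlinarith [mul_nonneg (sub_nonneg.mpr hhδ1) hw0, mul_nonneg hA1.h_pos.le hβ0]
    · nlinarith [mul_le_mul_of_nonneg_left hw1 (sub_nonneg.mpr hhδ1),
        mul_le_mul_of_nonneg_left hβ1 hA1.h_pos.le]

end SIWS

/-- the Jacobian of the update map at the healthy state equals
`I − hD_f + hB_f`; and if `ρ(D_f⁻¹B_f) ≤ 1` then `ρ(I − hD_f + hB_f) ≤ 1` and the healthy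
state is locally exponentially stable with convergence rate `ρ(I − hD_f + hB_f)`. -/
theorem stmt7 {n m : ℕ} (h wmax : ℝ) (δ : Fin n → ℝ) (δw : Fin m → ℝ)
    (B : Matrix (Fin n) (Fin n) ℝ) (Bw : Matrix (Fin n) (Fin m) ℝ)
    (Cw : Matrix (Fin m) (Fin n) ℝ)
    (hA1 : A1 h δ δw B Bw Cw wmax)
    (hA2 : Irred (BfM B Bw Cw)) :
    (⇑(fderiv ℝ (step h (DfM δ δw) (BfM B Bw Cw)) (0 : SIdx n m → ℝ)) =
      (1 - h • DfM δ δw + h • BfM B Bw Cw).mulVec) ∧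
    (specRad ((DfM δ δw)⁻¹ * BfM B Bw Cw) ≤ 1 →
      specRad (1 - h • DfM δ δw + h • BfM B Bw Cw) ≤ 1 ∧
      ∃ ε > (0 : ℝ), ∃ c > (0 : ℝ), ∀ z : ℕ → SIdx n m → ℝ,
        (∀ t, z (t + 1) = step h (DfM δ δw) (BfM B Bw Cw) (z t)) →
        inD wmax (z 0) → ‖z 0‖ ≤ ε →
        ∀ t, ‖z t‖ ≤ c * specRad (1 - h • DfM δ δw + h • BfM B Bw Cw) ^ t * ‖z 0‖) := by
  refine ⟨fderiv_step_zero h _ _, fun hR => ?_⟩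
  set M := 1 - h • DfM δ δw + h • BfM B Bw Cw
  obtain ⟨u, hu, hMu⟩ := exists_perron_vector hA1.jacobian_nonneg (hA1.irred_jacobian hA2)
  -- `max _ 1` only matters without nodes, where `‖u‖ = 0`.
  refine ⟨hA1.specRad_jacobian_le_one hA2 hR, 1, one_pos, max (‖u‖ * ‖u⁻¹‖) 1, by positivity,
    fun z hz hz0 _ t => ?_⟩
  have hzD : ∀ t, inD wmax (z t) := fun t =>
    Nat.rec hz0 (fun t ht => (hz t).symm ▸ hA1.step_mem_inD ht) t
  calc ‖z t‖ ≤ ‖u‖ * ‖u⁻¹‖ * specRad M ^ t * ‖z 0‖ :=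
        norm_le_of_le_mulVec hA1.jacobian_nonneg hu (specRad_nonneg M) hMu.le
          (fun t => nonneg_of_inD (hzD t))
          (fun t => (hz t).symm ▸ step_le_mulVec hA1.h_pos.le hA1.BfM_nonneg
            (nonneg_of_inD (hzD t))) t
    _ ≤ max (‖u‖ * ‖u⁻¹‖) 1 * specRad M ^ t * ‖z 0‖ := by
        have := specRad_nonneg M
        gcongr
        exact le_max_left _ _
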